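/- If λ is a regular cardinal and Dl_λ holds, then λ^{<λ} = λ. -/

import Mathlib

/-- `C` is a closed unbounded subset of the ordinal interval below `o`. -/
def IsClubIn (C : Set Ordinal) (o : Ordinal) : Prop :=
  (∀ a < o, ∃ b ∈ C, a ≤ b ∧ b < o) ∧
  (∀ a < o, a ≠ 0 → (∀ b < a, ∃ c ∈ C, b ≤ c ∧ c < a) → a ∈ C)

/-- `S` is stationary below `o`: it meets every club below `o`. -/
def IsStatIn (S : Set Ordinal) (o : Ordinal) : Prop :=
  ∀ C, IsClubIn C o → (S ∩ C).Nonempty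


/-- The principle `Dl_λ`: guessing families `𝒜_α ⊆ 𝒫(α)` of size `< λ`
which guess every `A ⊆ λ` stationarily often. -/
def DlCard (κ : Cardinal.{0}) : Prop :=
  ∃ 𝒜 : Ordinal → Set (Set Ordinal),
    (∀ α < Cardinal.ord κ, Cardinal.mk (𝒜 α) < Cardinal.lift.{1} κ ∧
      ∀ A ∈ 𝒜 α, A ⊆ Set.Iio α) ∧
    ∀ A : Set Ordinal, A ⊆ Set.Iio (Cardinal.ord κ) →
      IsStatIn {α | α < Cardinal.ord κ ∧ A ∩ Set.Iio α ∈ 𝒜 α} (Cardinal.ord κ)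

/-!
Every subset of an ordinal `p < λ` is guessed at stationarily many `α < λ`, in particular at
some `α ≥ p`, where the guess is the set itself. So `𝒫(p)` embeds into `⋃_{α<λ} 𝒜_α`, which has
size at most `λ`; hence `2^ν ≤ λ` for all `ν < λ`. For regular `λ` and `μ < λ`, every function
`μ → λ` is bounded below `λ`, so `λ^μ ≤ λ · sup_{β<λ} |β|^μ`, and `|β|^μ ≤ 2^{|β|·μ} ≤ λ`.
-/

open Cardinal Set

lemma isClubIn_Ici {p o : Ordinal} (hp : p < o) : IsClubIn (Ici p) o := by
  refine ⟨fun a ha => ⟨max a p, mem_Ici.2 (le_max_right _ _), le_max_left _ _, max_lt ha hp⟩, ?_⟩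
  intro a _ ha0 h
  obtain ⟨c, hc, -, hca⟩ := h 0 (pos_iff_ne_zero.2 ha0)
  exact le_trans hc hca.le

namespace Cardinal

universe u

theorem mk_Iio_ord (κ : Cardinal.{u}) : #(Iio κ.ord) = lift.{u + 1} κ := by
  rw [mk_Iio_ordinal, card_ord]

theorem mk_univ_pi_Iio (T : Type u) (β : Ordinal.{u}) :
    #(Set.univ.pi fun _ : T => Iio β) = lift.{u + 1} (β.card ^ #T) := by
  rw [mk_congr (Equiv.Set.univPi _), mk_arrow, mk_Iio_ordinal, lift_power, lift_lift]

theorem IsRegular.power_le_of_forall_power_le {κ μ c : Cardinal.{u}} (hκ : κ.IsRegular)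
    (hμ : μ < κ) (hc : κ ≤ c) (h : ∀ ν < κ, ν ^ μ ≤ c) : κ ^ μ ≤ c := by
  set T := μ.out
  have bounded :
      (Set.univ.pi fun _ : T => Iio κ.ord) ⊆ ⋃ β ∈ Iio κ.ord, Set.univ.pi fun _ => Iio β := by
    intro f hf
    simp only [mem_univ_pi, mem_Iio, mem_iUnion] at hf ⊢
    exact ⟨⨆ t, f t + 1, Ordinal.iSup_add_one_lt_of_lt_cof (by rwa [hκ.cof_ord, mk_out]) hf,
      fun t => (lt_add_one (f t)).trans_le (Ordinal.le_iSup (fun t => f t + 1) t)⟩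
  rw [← lift_le.{u + 1}]
  calc Cardinal.lift (κ ^ μ) = #(Set.univ.pi fun _ : T => Iio κ.ord) := by
        rw [mk_univ_pi_Iio, card_ord, mk_out]
    _ ≤ #(⋃ β ∈ Iio κ.ord, Set.univ.pi fun _ : T => Iio β) := mk_le_mk_of_subset bounded
    _ ≤ #(Iio κ.ord) * ⨆ β : Iio κ.ord, #(Set.univ.pi fun _ : T => Iio β.1) := mk_biUnion_le _ _
    _ ≤ Cardinal.lift c * Cardinal.lift c := by
      refine mul_le_mul' (by rw [mk_Iio_ord]; exact lift_le.2 hc) (ciSup_le' fun β => ?_)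
      rw [mk_univ_pi_Iio, mk_out]
      exact lift_le.2 (h _ (lt_ord.1 β.2))
    _ = Cardinal.lift c := mul_eq_self (by simpa using hκ.aleph0_le.trans hc)

end Cardinal

theorem DlCard.two_power_le {κ : Cardinal.{0}} (hκ : ℵ₀ ≤ κ) (hdl : DlCard κ) {ν : Cardinal.{0}}
    (hν : ν < κ) : 2 ^ ν ≤ κ := by
  obtain ⟨𝒜, h𝒜, hguess⟩ := hdl
  have hνκ : ν.ord < κ.ord := ord_lt_ord.2 hν
  have guessed : 𝒫 (Iio ν.ord) ⊆ ⋃ α ∈ Iio κ.ord, 𝒜 α := by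
    intro A (hA : A ⊆ Iio ν.ord)
    obtain ⟨α, ⟨hακ, hαA⟩, hνα⟩ :=
      hguess A (hA.trans (Iio_subset_Iio hνκ.le)) _ (isClubIn_Ici hνκ)
    rw [inter_eq_left.2 (hA.trans (Iio_subset_Iio hνα))] at hαA
    exact mem_biUnion hακ hαA
  rw [← lift_le.{1}]
  calc lift (2 ^ ν) = #(𝒫 (Iio ν.ord)) := by rw [mk_powerset, mk_Iio_ord, lift_two_power]
    _ ≤ #(⋃ α ∈ Iio κ.ord, 𝒜 α) := mk_le_mk_of_subset guessed
    _ ≤ #(Iio κ.ord) * ⨆ α : Iio κ.ord, #(𝒜 α) := mk_biUnion_le _ _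
    _ ≤ lift κ * lift κ := mul_le_mul' (mk_Iio_ord κ).le (ciSup_le' fun α => (h𝒜 α α.2).1.le)
    _ = lift κ := mul_eq_self (by simpa using hκ)

/-- If `λ` is regular and `Dl_λ` holds then `λ^{<λ} = λ`. -/
theorem dl_implies_powerlt (κ : Cardinal.{0}) (hreg : κ.IsRegular) (hdl : DlCard κ) :
    κ ^< κ = κ := by
  have hκ := hreg.aleph0_le
  refine le_antisymm (powerlt_le.2 fun μ hμ =>
    hreg.power_le_of_forall_power_le hμ le_rfl fun ν hν => ?_) ?_
  · calc ν ^ μ ≤ (2 ^ ν) ^ μ := power_le_power_right (cantor ν).le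
      _ = 2 ^ (ν * μ) := power_mul.symm
      _ ≤ κ := hdl.two_power_le hκ (mul_lt_of_lt hκ hν hμ)
  · simpa using le_powerlt κ (one_lt_aleph0.trans_le hκ)
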